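/- Let n ≥ 2 and let φ be a finite-order automorphism of the one-sided shift on (Fin n)^ℕ. Then φ admits a support: there exist a synchronizing core automaton A over Fin n and an automorphism Φ of the underlying digraph of A such that F_{A,Φ} = φ. -/
import Mathlib


/-- The one-sided shift map on `(Fin n)^ℕ`: `(σ x) i = x (i+1)`. -/
def shiftMap (n : ℕ) : (ℕ → Fin n) → (ℕ → Fin n) := fun x i => x (i + 1)

/-- `b` has orbit length exactly `N` under `f`: `N` is the least `L ≥ 1` with `f^[L] b = b`. -/
def HasOrbitLen {β : Type*} (f : β → β) (b : β) (N : ℕ) : Prop :=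
  IsLeast {L : ℕ | 0 < L ∧ f^[L] b = b} N

/-- An automorphism of the one-sided shift: a homeomorphism commuting with the shift. -/
def IsShiftAut (n : ℕ) (φ : (ℕ → Fin n) ≃ₜ (ℕ → Fin n)) : Prop :=
  ⇑φ ∘ shiftMap n = shiftMap n ∘ ⇑φ

/-- `φ` has finite order. -/
def FiniteOrderAut (n : ℕ) (φ : (ℕ → Fin n) ≃ₜ (ℕ → Fin n)) : Prop :=
  ∃ m : ℕ, 0 < m ∧ (⇑φ)^[m] = id

/-- Extension of the transition function of an automaton to words (letters read in order). -/
def transStar {n : ℕ} {Q : Type*} (π : Fin n → Q → Q) : List (Fin n) → Q → Q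
  | [], q => q
  | x :: w, q => transStar π w (π x q)

/-- The automaton `(Q, π)` is synchronizing at level `k` with synchronizing map `s`. -/
def SyncAtLevelWith {n : ℕ} {Q : Type*} (π : Fin n → Q → Q) (k : ℕ)
    (s : List (Fin n) → Q) : Prop :=
  ∀ w : List (Fin n), w.length = k → ∀ q : Q, transStar π w q = s w

/-- The synchronizing map `s` at level `k` is surjective (the automaton is core). -/
def CoreAt {n : ℕ} {Q : Type*} (s : List (Fin n) → Q) (k : ℕ) : Prop :=
  ∀ q : Q, ∃ w : List (Fin n), w.length = k ∧ s w = q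

/-- An automorphism of the underlying digraph of the automaton `(Q, π)`. -/
structure DigraphAut {Q : Type*} (n : ℕ) (π : Fin n → Q → Q) where
  α : Q ≃ Q
  lab : Q → Equiv.Perm (Fin n)
  compat : ∀ (x : Fin n) (q : Q), π (lab q x) (α q) = α (π x q)

/-- Action of a digraph automorphism on the edge set `Q × Fin n`. -/
def edgeMap {Q : Type*} {n : ℕ} {π : Fin n → Q → Q} (Φ : DigraphAut n π) :
    Q × Fin n → Q × Fin n :=
  fun e => (Φ.α e.1, Φ.lab e.1 e.2)

/-- The output word map `Λ` of a digraph automorphism. -/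
def outWord {Q : Type*} {n : ℕ} (π : Fin n → Q → Q) (lab : Q → Equiv.Perm (Fin n)) :
    List (Fin n) → Q → List (Fin n)
  | [], _ => []
  | x :: w, q => lab q x :: outWord π lab w (π x q)

/-- Action of a digraph automorphism on based circuits: `(q, w) ↦ (α q, Λ(w, q))`. -/
def circMap {Q : Type*} {n : ℕ} {π : Fin n → Q → Q} (Φ : DigraphAut n π) :
    Q × List (Fin n) → Q × List (Fin n) :=
  fun c => (Φ.α c.1, outWord π Φ.lab c.2 c.1)

/-- `(q, w)` is a based circuit: `w` nonempty and `π*(w, q) = q`. -/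
def IsBasedCircuit {Q : Type*} {n : ℕ} (π : Fin n → Q → Q) (c : Q × List (Fin n)) : Prop :=
  c.2 ≠ [] ∧ transStar π c.2 c.1 = c.1

/-- The sliding block code induced by an automaton synchronizing at level `k`
with synchronizing map `s` and digraph automorphism with labelling `lab`:
`(F x) i = lab q_i (x i)` where `q_i = s [x(i+k), x(i+k-1), …, x(i+1)]`. -/
def inducedMap {Q : Type*} {n : ℕ} (k : ℕ) (s : List (Fin n) → Q)
    (lab : Q → Equiv.Perm (Fin n)) : (ℕ → Fin n) → (ℕ → Fin n) :=
  fun x i => lab (s (List.ofFn fun j : Fin k => x (i + k - (j : ℕ)))) (x i)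

/-- `(A, Φ)` (with `A` synchronizing and core) is a support of the shift automorphism `φ`. -/
def IsSupport {Q : Type*} (n : ℕ) (π : Fin n → Q → Q) (Φ : DigraphAut n π)
    (φ : (ℕ → Fin n) ≃ₜ (ℕ → Fin n)) : Prop :=
  ∃ (k : ℕ) (s : List (Fin n) → Q), SyncAtLevelWith π k s ∧ CoreAt s k ∧
    inducedMap k s Φ.lab = ⇑φ

/-- The permutation automorphism of the shift induced by a permutation of `Fin n`. -/
def permAutMap {n : ℕ} (ρ : Equiv.Perm (Fin n)) : (ℕ → Fin n) → (ℕ → Fin n) :=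
  fun x i => ρ (x i)

/-- `t` is heavy for `(A, Φ, N)` with divisibility constant `b`. -/
def Heavy {Q : Type*} {n : ℕ} (π : Fin n → Q → Q) (Φ : DigraphAut n π)
    (N b : ℕ) (t : Q) : Prop :=
  b ∣ N ∧ b ≠ N ∧ (∀ r : ℕ, HasOrbitLen (⇑Φ.α) t r → r ∣ b) ∧
  ∀ (q : Q) (x : Fin n), π x q = t →
    ∀ L : ℕ, HasOrbitLen (edgeMap Φ) (q, x) L → Nat.lcm L b = N

namespace OSS

variable {n : ℕ}

abbrev XX (n : ℕ) := ℕ → Fin n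

/-- Prepend a letter. -/
def cons (a : Fin n) (y : XX n) : XX n := fun i => match i with
  | 0 => a
  | j+1 => y j

/-- Prepend a word. -/
def app (u : List (Fin n)) (y : XX n) : XX n := u.foldr cons y

lemma app_nil (y : XX n) : app [] y = y := rfl

lemma app_cons (x : Fin n) (u : List (Fin n)) (y : XX n) :
    app (x :: u) y = cons x (app u y) := rfl

lemma app_append (u v : List (Fin n)) (y : XX n) : app (u ++ v) y = app u (app v y) := by
  simp [app, List.foldr_append]

lemma shift_cons (a : Fin n) (y : XX n) : shiftMap n (cons a y) = y := rfl

lemma shiftIter_apply (L : ℕ) (z : XX n) (i : ℕ) : (shiftMap n)^[L] z i = z (i + L) := by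
  induction L generalizing z with
  | zero => rfl
  | succ k ih =>
    rw [Function.iterate_succ_apply, ih]
    rfl

lemma shiftIter_app_drop : ∀ (u : List (Fin n)) (y : XX n) (i : ℕ), i ≤ u.length →
    (shiftMap n)^[i] (app u y) = app (u.drop i) y := by
  intro u
  induction u with
  | nil =>
    intro y i h
    have hi : i = 0 := by simpa using h
    subst hi
    rfl
  | cons x w ih =>
    intro y i h
    cases i with
    | zero => rfl
    | succ j =>
      rw [Function.iterate_succ_apply]
      have h1 : shiftMap n (app (x :: w) y) = app w y := rfl
      rw [h1, ih y j (by simpa using h)]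
      rfl

lemma shiftIter_app (u : List (Fin n)) (y : XX n) :
    (shiftMap n)^[u.length] (app u y) = y := by
  rw [shiftIter_app_drop u y u.length le_rfl, List.drop_length, app_nil]

lemma app_apply_lt : ∀ (u : List (Fin n)) (y : XX n) (i : ℕ) (h : i < u.length),
    app u y i = u[i] := by
  intro u
  induction u with
  | nil => intro y i h; simp at h
  | cons x w ih =>
    intro y i h
    cases i with
    | zero => rfl
    | succ j =>
      have : app (x :: w) y (j+1) = app w y j := rfl
      rw [this, ih y j (by simpa using h)]
      rfl

lemma app_apply_ge : ∀ (u : List (Fin n)) (y : XX n) (i : ℕ), u.length ≤ i →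
    app u y i = y (i - u.length) := by
  intro u
  induction u with
  | nil => intro y i _; rfl
  | cons x w ih =>
    intro y i h
    cases i with
    | zero => simp at h
    | succ j =>
      have : app (x :: w) y (j+1) = app w y j := rfl
      rw [this, ih y j (by simpa using h)]
      congr 1
      simp

lemma eq_ext {L : ℕ} {z z' : XX n} (h1 : ∀ i < L, z i = z' i)
    (h2 : (shiftMap n)^[L] z = (shiftMap n)^[L] z') : z = z' := by
  funext i
  rcases lt_or_ge i L with h | h
  · exact h1 i h
  · have := congrFun h2 (i - L)
    rw [shiftIter_apply, shiftIter_apply, Nat.sub_add_cancel h] at this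
    exact this

variable (φ : XX n ≃ₜ XX n)

lemma commute_shift (hφ : IsShiftAut n φ) (t L : ℕ) (z : XX n) :
    (shiftMap n)^[L] ((⇑φ)^[t] z) = (⇑φ)^[t] ((shiftMap n)^[L] z) := by
  have h : Function.Commute (⇑φ) (shiftMap n) := fun x => congrFun hφ x
  exact ((h.iterate_left t).iterate_right L z).symm

/-- The local indistinguishability relation. -/
def Rel (y y' : XX n) : Prop :=
  ∀ (t : ℕ) (u : List (Fin n)) (i : ℕ), i < u.length →
    (⇑φ)^[t] (app u y) i = (⇑φ)^[t] (app u y') i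

def st : Setoid (XX n) :=
  ⟨Rel φ, ⟨fun _ _ _ _ _ => rfl, fun h t u i hi => (h t u i hi).symm,
    fun h1 h2 t u i hi => (h1 t u i hi).trans (h2 t u i hi)⟩⟩

lemma cont_iter (t : ℕ) : Continuous ((⇑φ)^[t]) := by
  induction t with
  | zero => simpa using continuous_id
  | succ k ih =>
    rw [Function.iterate_succ]
    exact ih.comp φ.continuous

lemma exists_block_single (g : XX n → XX n) (hg : Continuous g) :
    ∃ K : ℕ, ∀ z z' : XX n, (∀ j < K, z j = z' j) → g z 0 = g z' 0 := by
  classical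
  set C : ℕ → Set (XX n × XX n) :=
    fun k => {p | (∀ j < k, p.1 j = p.2 j) ∧ g p.1 0 ≠ g p.2 0} with hC
  have hmono : ∀ {k k' : ℕ}, k ≤ k' → C k' ⊆ C k := by
    intro k k' h p hp
    exact ⟨fun j hj => hp.1 j (lt_of_lt_of_le hj h), hp.2⟩
  have hclosed : ∀ k, IsClosed (C k) := by
    intro k
    have h1 : IsClosed {p : XX n × XX n | ∀ j < k, p.1 j = p.2 j} := by
      have : {p : XX n × XX n | ∀ j < k, p.1 j = p.2 j}
          = ⋂ (j : ℕ) (_ : j < k), {p : XX n × XX n | p.1 j = p.2 j} := by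
        ext p; simp
      rw [this]
      exact isClosed_iInter fun j => isClosed_iInter fun _ =>
        isClosed_eq ((continuous_apply j).comp continuous_fst)
          ((continuous_apply j).comp continuous_snd)
    have h2 : IsClosed {p : XX n × XX n | g p.1 0 ≠ g p.2 0} := by
      have hc : Continuous (fun p : XX n × XX n => (g p.1 0, g p.2 0)) :=
        (((continuous_apply 0).comp (hg.comp continuous_fst)).prodMk
          ((continuous_apply 0).comp (hg.comp continuous_snd)))
      have : {p : XX n × XX n | g p.1 0 ≠ g p.2 0}
          = (fun p : XX n × XX n => (g p.1 0, g p.2 0)) ⁻¹' {q : Fin n × Fin n | q.1 ≠ q.2} := rfl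
      rw [this]
      exact (isClosed_discrete _).preimage hc
    exact h1.inter h2
  have hempty : (Set.univ : Set (XX n × XX n)) ∩ ⋂ k, C k = ∅ := by
    rw [Set.eq_empty_iff_forall_notMem]
    intro p hp
    have hall : ∀ k, p ∈ C k := by
      intro k
      exact Set.mem_iInter.mp hp.2 k
    have heq : p.1 = p.2 := by
      funext j
      exact (hall (j+1)).1 j (Nat.lt_succ_self j)
    exact (hall 0).2 (by rw [heq])
  obtain ⟨t, ht⟩ := isCompact_univ.elim_finite_subfamily_closed C hclosed hempty
  refine ⟨t.sup id + 1, fun z z' hzz => ?_⟩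
  by_contra hne
  have hmem : (z, z') ∈ C (t.sup id + 1) := ⟨fun j hj => hzz j hj, hne⟩
  have : (z, z') ∈ (Set.univ : Set (XX n × XX n)) ∩ ⋂ k ∈ t, C k := by
    refine ⟨trivial, Set.mem_iInter₂.mpr fun k hk => ?_⟩
    exact hmono (le_trans (Finset.le_sup (f := id) hk) (Nat.le_succ _)) hmem
  rw [ht] at this
  exact this

lemma iterate_mod {β : Type*} (f : β → β) {m : ℕ} (hm : f^[m] = id) (t : ℕ) :
    f^[t] = f^[t % m] := by
  conv_lhs => rw [← Nat.div_add_mod t m]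
  rw [Function.iterate_add, Function.iterate_mul, hm, Function.iterate_id]
  rfl

lemma key_block (hfin : FiniteOrderAut n φ) :
    ∃ K : ℕ, ∀ (t : ℕ) (z z' : XX n), (∀ j < K, z j = z' j) →
      (⇑φ)^[t] z 0 = (⇑φ)^[t] z' 0 := by
  obtain ⟨m, hm0, hmid⟩ := hfin
  choose B hB using fun t : ℕ => exists_block_single ((⇑φ)^[t]) (cont_iter φ t)
  refine ⟨(Finset.range m).sup B, fun t z z' hzz => ?_⟩
  rw [iterate_mod _ hmid t]
  exact hB (t % m) z z' fun j hj => hzz j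
    (lt_of_lt_of_le hj (Finset.le_sup (Finset.mem_range.mpr (Nat.mod_lt _ hm0))))

lemma rel_of_agree (hφ : IsShiftAut n φ) {K : ℕ}
    (hK : ∀ (t : ℕ) (z z' : XX n), (∀ j < K, z j = z' j) →
      (⇑φ)^[t] z 0 = (⇑φ)^[t] z' 0)
    {y y' : XX n} (h : ∀ j < K, y j = y' j) : Rel φ y y' := by
  intro t u i hi
  have e : ∀ y0 : XX n, (⇑φ)^[t] (app u y0) i = (⇑φ)^[t] (app (u.drop i) y0) 0 := by
    intro y0
    have h1 : (shiftMap n)^[i] ((⇑φ)^[t] (app u y0)) 0 = (⇑φ)^[t] (app u y0) i := by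
      rw [shiftIter_apply]; rw [Nat.zero_add]
    rw [← h1, commute_shift φ hφ, shiftIter_app_drop u y0 i (le_of_lt hi)]
  rw [e y, e y']
  apply hK t
  intro j hj
  rcases lt_or_ge j (u.drop i).length with hlt | hge
  · rw [app_apply_lt _ _ j hlt, app_apply_lt _ _ j hlt]
  · rw [app_apply_ge _ _ j hge, app_apply_ge _ _ j hge]
    exact h _ (lt_of_le_of_lt (Nat.sub_le j _) hj)

lemma exists_preimage (hφ : IsShiftAut n φ) (y : XX n) (u : List (Fin n)) :
    ∃ u' : List (Fin n), u'.length = u.length ∧ ⇑φ (app u' y) = app u (⇑φ y) := by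
  set L := u.length with hL
  have tail : ∀ v : Fin L → Fin n,
      (shiftMap n)^[L] (⇑φ (app (List.ofFn v) y)) = ⇑φ y := by
    intro v
    have h1 := commute_shift φ hφ 1 L (app (List.ofFn v) y)
    simp only [Function.iterate_one] at h1
    rw [h1]
    have h2 : (shiftMap n)^[L] (app (List.ofFn v) y) = y := by
      have := shiftIter_app (List.ofFn v) y
      simpa using this
    rw [h2]
  have tailu : (shiftMap n)^[L] (app u (⇑φ y)) = ⇑φ y := by
    rw [hL]; exact shiftIter_app u (⇑φ y)
  set F : (Fin L → Fin n) → (Fin L → Fin n) :=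
    fun v j => ⇑φ (app (List.ofFn v) y) j with hF
  have hinj : Function.Injective F := by
    intro v v' hv
    have hz : ⇑φ (app (List.ofFn v) y) = ⇑φ (app (List.ofFn v') y) := by
      apply eq_ext (L := L)
      · intro i hi
        exact congrFun hv ⟨i, hi⟩
      · rw [tail v, tail v']
    have happ := φ.injective hz
    funext j
    have h1 : app (List.ofFn v) y (j : ℕ) = app (List.ofFn v') y (j : ℕ) := by rw [happ]
    rw [app_apply_lt _ _ _ (by simpa using j.isLt), app_apply_lt _ _ _ (by simpa using j.isLt)]
      at h1
    simpa [List.getElem_ofFn] using h1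
  obtain ⟨v', hv'⟩ := (Finite.injective_iff_surjective.mp hinj)
    (fun j : Fin L => app u (⇑φ y) (j : ℕ))
  refine ⟨List.ofFn v', by simp, ?_⟩
  apply eq_ext (L := L)
  · intro i hi
    exact congrFun hv' ⟨i, hi⟩
  · rw [tail v', tailu]

lemma rel_phi (hφ : IsShiftAut n φ) {y y' : XX n} (h : Rel φ y y') :
    Rel φ (⇑φ y) (⇑φ y') := by
  intro t u i hi
  obtain ⟨u', hlen, hu'⟩ := exists_preimage φ hφ y u
  have hu'' : ⇑φ (app u' y') = app u (⇑φ y') := by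
    apply eq_ext (L := u.length)
    · intro j hj
      have e1 : ⇑φ (app u' y') j = ⇑φ (app u' y) j := by
        have := h 1 u' j (by omega)
        simpa using this.symm
      rw [e1, hu', app_apply_lt u _ j hj, app_apply_lt u _ j hj]
    · have c1 := commute_shift φ hφ 1 u.length (app u' y')
      simp only [Function.iterate_one] at c1
      rw [c1]
      have c2 : (shiftMap n)^[u.length] (app u' y') = y' := by
        rw [← hlen]; exact shiftIter_app u' y'
      rw [c2]
      exact (shiftIter_app u (⇑φ y')).symm
  calc (⇑φ)^[t] (app u (⇑φ y)) i = (⇑φ)^[t] (⇑φ (app u' y)) i := by rw [hu']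
    _ = (⇑φ)^[t+1] (app u' y) i := by rw [Function.iterate_succ_apply]
    _ = (⇑φ)^[t+1] (app u' y') i := h (t+1) u' i (by omega)
    _ = (⇑φ)^[t] (⇑φ (app u' y')) i := by rw [Function.iterate_succ_apply]
    _ = (⇑φ)^[t] (app u (⇑φ y')) i := by rw [hu'']

lemma rel_phi_iter (hφ : IsShiftAut n φ) (s : ℕ) {y y' : XX n} (h : Rel φ y y') :
    Rel φ ((⇑φ)^[s] y) ((⇑φ)^[s] y') := by
  induction s with
  | zero => exact h
  | succ k ih =>
    rw [Function.iterate_succ_apply', Function.iterate_succ_apply']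
    exact rel_phi φ hφ ih

/-- local letter map -/
def labF (y : XX n) (a : Fin n) : Fin n := ⇑φ (cons a y) 0

lemma labF_inj (hφ : IsShiftAut n φ) (y : XX n) : Function.Injective (labF φ y) := by
  intro a b hab
  have h1 : ⇑φ (cons a y) = ⇑φ (cons b y) := by
    apply eq_ext (L := 1)
    · intro i hi
      interval_cases i
      exact hab
    · simp only [Function.iterate_one]
      have ca := commute_shift φ hφ 1 1 (cons a y)
      have cb := commute_shift φ hφ 1 1 (cons b y)
      simp only [Function.iterate_one] at ca cb
      rw [ca, cb, shift_cons, shift_cons]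
  have := φ.injective h1
  have := congrFun this 0
  exact this

noncomputable def labPerm (hφ : IsShiftAut n φ) (y : XX n) : Equiv.Perm (Fin n) :=
  Equiv.ofBijective (labF φ y) (Finite.injective_iff_bijective.mp (labF_inj φ hφ y))

lemma labF_rel {y y' : XX n} (h : Rel φ y y') : labF φ y = labF φ y' := by
  funext a
  have := h 1 [a] 0 (by simp)
  simpa [labF, app_cons, app_nil] using this

noncomputable def labQ (hφ : IsShiftAut n φ) : Quotient (st φ) → Equiv.Perm (Fin n) :=
  Quotient.lift (labPerm φ hφ) (fun y y' h => Equiv.ext fun a => by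
    show labF φ y a = labF φ y' a
    rw [labF_rel φ h])

def trans1 (x : Fin n) : Quotient (st φ) → Quotient (st φ) :=
  Quotient.lift (fun y => Quotient.mk (st φ) (cons x y))
    (fun y y' h => Quotient.sound (fun t u i hi => by
      have := h t (u ++ [x]) i (by simp; omega)
      simpa [app_append, app_cons, app_nil] using this))

lemma transStar_mk : ∀ (w : List (Fin n)) (y : XX n),
    transStar (trans1 φ) w (Quotient.mk (st φ) y) = Quotient.mk (st φ) (app w.reverse y) := by
  intro w
  induction w with
  | nil => intro y; rfl
  | cons x w ih =>
    intro y
    show transStar (trans1 φ) w (trans1 φ x (Quotient.mk (st φ) y)) = _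
    have h1 : trans1 φ x (Quotient.mk (st φ) y) = Quotient.mk (st φ) (cons x y) := rfl
    rw [h1, ih (cons x y)]
    congr 1
    rw [List.reverse_cons, app_append]
    rfl

noncomputable def alphaE (hφ : IsShiftAut n φ) (m : ℕ) (hm0 : 0 < m)
    (hmid : (⇑φ)^[m] = id) : Quotient (st φ) ≃ Quotient (st φ) where
  toFun := Quotient.lift (fun y => Quotient.mk (st φ) (⇑φ y))
    (fun y y' h => Quotient.sound (rel_phi φ hφ h))
  invFun := Quotient.lift (fun y => Quotient.mk (st φ) ((⇑φ)^[m-1] y))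
    (fun y y' h => Quotient.sound (rel_phi_iter φ hφ (m-1) h))
  left_inv := by
    refine Quotient.ind fun y => ?_
    show Quotient.mk (st φ) ((⇑φ)^[m-1] (⇑φ y)) = Quotient.mk (st φ) y
    have : (⇑φ)^[m-1] (⇑φ y) = (⇑φ)^[m] y := by
      rw [← Function.iterate_succ_apply]
      congr 1
      omega
    rw [this, hmid]
    rfl
  right_inv := by
    refine Quotient.ind fun y => ?_
    show Quotient.mk (st φ) (⇑φ ((⇑φ)^[m-1] y)) = Quotient.mk (st φ) y
    have : ⇑φ ((⇑φ)^[m-1] y) = (⇑φ)^[m] y := by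
      have h2 : ⇑φ ((⇑φ)^[m-1] y) = (⇑φ)^[(m-1)+1] y :=
        (Function.iterate_succ_apply' (⇑φ) (m-1) y).symm
      rw [h2]
      congr 1
      omega
    rw [this, hmid]
    rfl

lemma compat_key (hφ : IsShiftAut n φ) (x : Fin n) (y : XX n) :
    cons (labF φ y x) (⇑φ y) = ⇑φ (cons x y) := by
  funext i
  cases i with
  | zero => rfl
  | succ j =>
    show ⇑φ y j = ⇑φ (cons x y) (j+1)
    have c := commute_shift φ hφ 1 1 (cons x y)
    simp only [Function.iterate_one] at c
    rw [shift_cons] at c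
    have := congrFun c j
    exact this.symm

end OSS

theorem finite_order_shift_automorphism_admits_support (n : ℕ) (hn : 2 ≤ n)
    (φ : (ℕ → Fin n) ≃ₜ (ℕ → Fin n)) (hφ : IsShiftAut n φ)
    (hfin : FiniteOrderAut n φ) :
    ∃ (Q : Type) (_ : Fintype Q) (_ : Nonempty Q) (π : Fin n → Q → Q)
      (Φ : DigraphAut n π), IsSupport n π Φ φ := by
  classical
  haveI : NeZero n := ⟨by omega⟩
  obtain ⟨m, hm0, hmid⟩ := hfin
  obtain ⟨K, hK⟩ := OSS.key_block φ ⟨m, hm0, hmid⟩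
  set z0 : OSS.XX n := fun _ => (0 : Fin n) with hz0
  have hsurj : Function.Surjective
      (fun v : Fin K → Fin n => Quotient.mk (OSS.st φ) (OSS.app (List.ofFn v) z0)) := by
    refine Quotient.ind fun y => ?_
    refine ⟨fun j => y (j : ℕ), Quotient.sound (OSS.rel_of_agree φ hφ hK ?_)⟩
    intro j hj
    rw [OSS.app_apply_lt _ _ j (by simpa using hj)]
    simp [List.getElem_ofFn]
  haveI : Fintype (Quotient (OSS.st φ)) := Fintype.ofSurjective _ hsurj
  refine ⟨Quotient (OSS.st φ), inferInstance, ⟨Quotient.mk _ z0⟩, OSS.trans1 φ,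
    ⟨OSS.alphaE φ hφ m hm0 hmid, OSS.labQ φ hφ, ?compat⟩,
    K, fun w => Quotient.mk (OSS.st φ) (OSS.app w.reverse z0), ?sync, ?core, ?ind⟩
  case compat =>
    intro x q
    induction q using Quotient.ind with | _ y =>
    show Quotient.mk (OSS.st φ) (OSS.cons (OSS.labF φ y x) (⇑φ y))
        = Quotient.mk (OSS.st φ) (⇑φ (OSS.cons x y))
    rw [OSS.compat_key φ hφ x y]
  case sync =>
    intro w hw
    refine Quotient.ind fun y => ?_
    rw [OSS.transStar_mk φ w y]
    apply Quotient.sound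
    apply OSS.rel_of_agree φ hφ hK
    intro j hj
    have hjl : j < w.reverse.length := by simpa [hw] using hj
    rw [OSS.app_apply_lt _ _ j hjl, OSS.app_apply_lt _ _ j hjl]
  case core =>
    refine Quotient.ind fun y => ?_
    refine ⟨(List.ofFn fun j : Fin K => y (j : ℕ)).reverse, by simp, ?_⟩
    show Quotient.mk (OSS.st φ)
        (OSS.app ((List.ofFn fun j : Fin K => y (j : ℕ)).reverse).reverse z0)
      = Quotient.mk (OSS.st φ) y
    rw [List.reverse_reverse]
    apply Quotient.sound
    apply OSS.rel_of_agree φ hφ hK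
    intro j hj
    rw [OSS.app_apply_lt _ _ j (by simpa using hj)]
    simp [List.getElem_ofFn]
  case ind =>
    funext x i
    simp only [inducedMap]
    have hclass : Quotient.mk (OSS.st φ)
          (OSS.app (List.ofFn fun j : Fin K => x (i + K - (j : ℕ))).reverse z0)
        = Quotient.mk (OSS.st φ) ((shiftMap n)^[i+1] x) := by
      apply Quotient.sound
      apply OSS.rel_of_agree φ hφ hK
      intro j hj
      have hl : j < (List.ofFn fun j : Fin K => x (i + K - (j : ℕ))).reverse.length := by
        simpa using hj
      rw [OSS.app_apply_lt _ _ j hl, OSS.shiftIter_apply, List.getElem_reverse,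
        List.getElem_ofFn]
      simp only [List.length_ofFn]
      congr 1
      omega
    show OSS.labQ φ hφ (Quotient.mk (OSS.st φ)
        (OSS.app (List.ofFn fun j : Fin K => x (i + K - (j : ℕ))).reverse z0)) (x i) = ⇑φ x i
    rw [hclass]
    show OSS.labF φ ((shiftMap n)^[i+1] x) (x i) = ⇑φ x i
    have h3 : OSS.cons (x i) ((shiftMap n)^[i+1] x) = (shiftMap n)^[i] x := by
      funext j
      cases j with
      | zero =>
        show x i = (shiftMap n)^[i] x 0
        rw [OSS.shiftIter_apply]
        congr 1
        omega
      | succ j =>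
        show (shiftMap n)^[i+1] x j = (shiftMap n)^[i] x (j+1)
        rw [OSS.shiftIter_apply, OSS.shiftIter_apply]
        congr 1
        omega
    show ⇑φ (OSS.cons (x i) ((shiftMap n)^[i+1] x)) 0 = ⇑φ x i
    rw [h3]
    have c := OSS.commute_shift φ hφ 1 i x
    simp only [Function.iterate_one] at c
    rw [← c, OSS.shiftIter_apply, Nat.zero_add]
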